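/- The set of saturated two-layer networks is a complete set of filters: if there exists a sorting network on n channels of depth d ≥ 2, then there exists a sorting network on n channels of depth d whose first two layers form a saturated two-layer comparator network. -/

import Mathlib

namespace SN

open scoped Classical

/-- A comparator on `n` channels: a pair of channels. -/
abbrev Comp (n : ℕ) := Fin n × Fin n

/-- A layer is a finite set of comparators. -/
abbrev Layer (n : ℕ) := Finset (Comp n)

/-- A comparator network is a sequence (list) of layers; its depth is the length. -/
abbrev Net (n : ℕ) := List (Layer n)

/-- Each channel is used by at most one comparator of the layer. -/
def NoOverlap {n : ℕ} (L : Layer n) : Prop :=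
  ∀ c ∈ L, ∀ c' ∈ L, c ≠ c' →
    c.1 ≠ c'.1 ∧ c.1 ≠ c'.2 ∧ c.2 ≠ c'.1 ∧ c.2 ≠ c'.2

/-- A (standard) layer: comparators `(i,j)` with `i < j`, channels pairwise disjoint. -/
def IsLayer {n : ℕ} (L : Layer n) : Prop :=
  (∀ c ∈ L, c.1 < c.2) ∧ NoOverlap L

/-- A generalized layer: comparators `(i,j)` with `i ≠ j` allowed in any order. -/
def IsGenLayer {n : ℕ} (L : Layer n) : Prop :=
  (∀ c ∈ L, c.1 ≠ c.2) ∧ NoOverlap L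

def IsNet {n : ℕ} (C : Net n) : Prop := ∀ L ∈ C, IsLayer L

def IsGenNet {n : ℕ} (C : Net n) : Prop := ∀ L ∈ C, IsGenLayer L

/-- Apply one layer to a Boolean vector: a comparator `(i,j)` puts the min
(`&&`) on channel `i` and the max (`||`) on channel `j`. -/
noncomputable def applyLayer {n : ℕ} (L : Layer n) (x : Fin n → Bool) : Fin n → Bool :=
  fun k =>
    if h1 : ∃ c ∈ L, c.1 = k then x h1.choose.1 && x h1.choose.2
    else if h2 : ∃ c ∈ L, c.2 = k then x h2.choose.1 || x h2.choose.2
    else x k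

/-- Run a comparator network on a Boolean input (layers applied in sequence). -/
noncomputable def run {n : ℕ} (C : Net n) (x : Fin n → Bool) : Fin n → Bool :=
  C.foldl (fun y L => applyLayer L y) x

/-- Ascendingly sorted Boolean vector. -/
def BSorted {n : ℕ} (x : Fin n → Bool) : Prop :=
  ∀ i j : Fin n, i ≤ j → x i ≤ x j

/-- A sorting network: a comparator network sorting every Boolean input. -/
def IsSortingNet {n : ℕ} (C : Net n) : Prop :=
  IsNet C ∧ ∀ x : Fin n → Bool, BSorted (run C x)

/-- The set of outputs of a network on all Boolean inputs. -/
def outputs {n : ℕ} (C : Net n) : Set (Fin n → Bool) := Set.range (run C)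

/-- Apply one layer to a vector of naturals. -/
noncomputable def applyLayerN {n : ℕ} (L : Layer n) (x : Fin n → ℕ) : Fin n → ℕ :=
  fun k =>
    if h1 : ∃ c ∈ L, c.1 = k then min (x h1.choose.1) (x h1.choose.2)
    else if h2 : ∃ c ∈ L, c.2 = k then max (x h2.choose.1) (x h2.choose.2)
    else x k

noncomputable def runN {n : ℕ} (C : Net n) (x : Fin n → ℕ) : Fin n → ℕ :=
  C.foldl (fun y L => applyLayerN L y) x

def NSorted {n : ℕ} (x : Fin n → ℕ) : Prop :=
  ∀ i j : Fin n, i ≤ j → x i ≤ x j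

/-- Permute the coordinates of a Boolean vector by `π` (channel `k`'s value
moves to channel `π k`). -/
def permVec {n : ℕ} (π : Equiv.Perm (Fin n)) (x : Fin n → Bool) : Fin n → Bool :=
  fun i => x (π.symm i)

/-- The image of a set of Boolean vectors under coordinate permutation by `π`. -/
def permSet {n : ℕ} (π : Equiv.Perm (Fin n)) (X : Set (Fin n → Bool)) :
    Set (Fin n → Bool) :=
  permVec π '' X

/-- The image `π(L)` of a layer under a permutation of channels. -/
def permLayer {n : ℕ} (π : Equiv.Perm (Fin n)) (L : Layer n) : Layer n :=
  L.image fun c => (π c.1, π c.2)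

/-- Channel `i` is used by some comparator of the layer `L`. -/
def usedIn {n : ℕ} (L : Layer n) (i : Fin n) : Prop := ∃ c ∈ L, c.1 = i ∨ c.2 = i

/-- Channels `i` and `j` are joined by a comparator of `L`. -/
def Joined {n : ℕ} (L : Layer n) (i j : Fin n) : Prop := (i, j) ∈ L ∨ (j, i) ∈ L

/-- `i` is the smaller channel of some comparator of `L` (a min-channel). -/
def MinChan {n : ℕ} (L : Layer n) (i : Fin n) : Prop := ∃ c ∈ L, c.1 = i

/-- `i` is the larger channel of some comparator of `L` (a max-channel). -/
def MaxChan {n : ℕ} (L : Layer n) (i : Fin n) : Prop := ∃ c ∈ L, c.2 = i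

/-- A two-layer network `[L1, L2]` is redundant if some comparator can be removed
so that the outputs of the result are a permutation of the original outputs. -/
def Redundant {n : ℕ} (L1 L2 : Layer n) : Prop :=
  ∃ π : Equiv.Perm (Fin n),
    (∃ c ∈ L1, outputs [L1.erase c, L2] = permSet π (outputs [L1, L2])) ∨
    (∃ c ∈ L2, outputs [L1, L2.erase c] = permSet π (outputs [L1, L2]))

/-- A two-layer network `[L1, L2]` is saturated if it is non-redundant and no
comparator on two channels unused in the second layer can be added to the second
layer so as to make the output set a proper subset of a permutation of the
original output set. -/
def Saturated {n : ℕ} (L1 L2 : Layer n) : Prop :=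
  ¬ Redundant L1 L2 ∧
  ¬ ∃ (c : Comp n) (π : Equiv.Perm (Fin n)),
      c.1 < c.2 ∧ ¬ usedIn L2 c.1 ∧ ¬ usedIn L2 c.2 ∧
      outputs [L1, insert c L2] ⊂ permSet π (outputs [L1, L2])

/-- Vertices of the graph representation of `C`: the comparators of `C`,
tagged with the index of the layer containing them. -/
def Vertex {n : ℕ} (C : Net n) := {p : ℕ × Comp n // p.2 ∈ C.getD p.1 ∅}

/-- The channel carrying the min output (`b = false`, label 1) or max output
(`b = true`, label 2) of a comparator. -/
def outChan {n : ℕ} (c : Comp n) (b : Bool) : Fin n := if b then c.2 else c.1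

/-- An edge with label `b` (1 for min, 2 for max) from comparator `u` to
comparator `v`: the corresponding output of `u` is an input of `v`, i.e. `v`
is the next comparator on that channel. -/
def Edge {n : ℕ} (C : Net n) (b : Bool) (u v : ℕ × Comp n) : Prop :=
  u.1 < v.1 ∧ (outChan u.2 b = v.2.1 ∨ outChan u.2 b = v.2.2) ∧
  ∀ m, u.1 < m → m < v.1 → ¬ usedIn (C.getD m ∅) (outChan u.2 b)

/-- The graph representations of `C` and `D` are isomorphic: a bijection of
comparators preserving the labeled edges. -/
def GraphIso {n m : ℕ} (C : Net n) (D : Net m) : Prop :=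
  ∃ f : Vertex C ≃ Vertex D,
    ∀ (b : Bool) (u v : Vertex C),
      Edge C b u.val v.val ↔ Edge D b (f u).val (f v).val

/-- The graph representation of `C` is connected. -/
def GraphConnected {n : ℕ} (C : Net n) : Prop :=
  ∀ u v : Vertex C,
    Relation.ReflTransGen
      (fun a b : Vertex C => ∃ ℓ : Bool, Edge C ℓ a.val b.val ∨ Edge C ℓ b.val a.val) u v

/-- Reflection of a comparator: `(i,j) ↦ (n-j+1, n-i+1)` (in 1-based terms). -/
def reflectComp {n : ℕ} (c : Comp n) : Comp n := (c.2.rev, c.1.rev)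

def reflectLayer {n : ℕ} (L : Layer n) : Layer n := L.image reflectComp

/-- Reflection `C^R` of a comparator network. -/
def reflect {n : ℕ} (C : Net n) : Net n := C.map reflectLayer

/-- The first layer `F_n = {(2i-1, 2i) : 1 ≤ i ≤ ⌊n/2⌋}` (0-indexed: `(2i, 2i+1)`). -/
def FLayer (n : ℕ) : Layer n :=
  Finset.univ.filter fun c : Comp n => c.1.val % 2 = 0 ∧ c.2.val = c.1.val + 1

/-- The two-layer networks with first layer `F_n`, parametrized by second layer. -/
def SecondLayers (n : ℕ) := {L : Layer n // IsLayer L}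

/-- The number `|R(G_n)|` of equivalence classes of two-layer networks with
first layer `F_n`, under graph isomorphism `≈`. -/
noncomputable def numClasses (n : ℕ) : ℕ :=
  Nat.card (Quot fun L L' : SecondLayers n =>
    GraphIso ([FLayer n, L.val] : Net n) ([FLayer n, L'.val] : Net n))

/-- Redundant two-layer networks with first layer `F_n`. -/
def RedLayers (n : ℕ) := {L : Layer n // IsLayer L ∧ Redundant (FLayer n) L}

/-- The number of equivalence classes of redundant two-layer networks with
first layer `F_n`, under graph isomorphism `≈`. -/
noncomputable def numRedClasses (n : ℕ) : ℕ :=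
  Nat.card (Quot fun L L' : RedLayers n =>
    GraphIso ([FLayer n, L.val] : Net n) ([FLayer n, L'.val] : Net n))

/-!
Among the sorting networks of depth `d`, take one whose first two layers have as few outputs as
possible and, among those, as few comparators as possible. Deleting a comparator without changing
the outputs up to a permutation, or adding a comparator that shrinks them, would give a two-layer
prefix whose outputs lie in a permutation `π` of the old ones. Such a prefix can be completed to a
sorting network of the same depth: the old suffix, run after `π`, can be untangled into a standard
network that sends every new output to a permutation `τ` of a sorted vector; sorted vectors pass
unchanged through any standard network, and a permutation of a sorted Boolean vector is sorted
only if it equals it, so `τ` fixes the sorted vectors and the completed network sorts. This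
contradicts minimality, so the minimiser is saturated.
-/

variable {n : ℕ}

section Layers

lemma NoOverlap.eq_of_shared_channel {L : Layer n} (h : NoOverlap L) {c c' : Comp n}
    (hc : c ∈ L) (hc' : c' ∈ L)
    (hch : c.1 = c'.1 ∨ c.1 = c'.2 ∨ c.2 = c'.1 ∨ c.2 = c'.2) : c = c' := by
  by_contra hne
  obtain ⟨h1, h2, h3, h4⟩ := h c hc c' hc' hne
  tauto

lemma applyLayer_of_mem_fst {L : Layer n} (hL : NoOverlap L) {i j : Fin n}
    (hij : (i, j) ∈ L) (x : Fin n → Bool) : applyLayer L x i = (x i && x j) := by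
  have h1 : ∃ c ∈ L, c.1 = i := ⟨(i, j), hij, rfl⟩
  have hc : h1.choose = (i, j) :=
    hL.eq_of_shared_channel h1.choose_spec.1 hij (Or.inl h1.choose_spec.2)
  rw [applyLayer, dif_pos h1, hc]

lemma applyLayer_of_mem_snd {L : Layer n} (hL : IsGenLayer L) {i j : Fin n}
    (hij : (i, j) ∈ L) (x : Fin n → Bool) : applyLayer L x j = (x i || x j) := by
  have hno : ¬ ∃ c ∈ L, c.1 = j := by
    rintro ⟨c, hc, hcj⟩
    have := hL.2.eq_of_shared_channel hc hij (Or.inr (Or.inl hcj))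
    subst this
    exact hL.1 _ hc hcj
  have h2 : ∃ c ∈ L, c.2 = j := ⟨(i, j), hij, rfl⟩
  have hc : h2.choose = (i, j) :=
    hL.2.eq_of_shared_channel h2.choose_spec.1 hij (Or.inr (Or.inr (Or.inr h2.choose_spec.2)))
  rw [applyLayer, dif_neg hno, dif_pos h2, hc]

lemma applyLayer_of_not_usedIn {L : Layer n} {k : Fin n} (h : ¬ usedIn L k)
    (x : Fin n → Bool) : applyLayer L x k = x k := by
  have h1 : ¬ ∃ c ∈ L, c.1 = k := fun ⟨c, hc, hk⟩ => h ⟨c, hc, Or.inl hk⟩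
  have h2 : ¬ ∃ c ∈ L, c.2 = k := fun ⟨c, hc, hk⟩ => h ⟨c, hc, Or.inr hk⟩
  rw [applyLayer, dif_neg h1, dif_neg h2]

lemma IsGenLayer.applyLayer_cases {L : Layer n} (hL : IsGenLayer L) (x : Fin n → Bool)
    (k : Fin n) :
    (∃ j, (k, j) ∈ L ∧ applyLayer L x k = (x k && x j)) ∨
    (∃ i, (i, k) ∈ L ∧ applyLayer L x k = (x i || x k)) ∨
    (¬ usedIn L k ∧ applyLayer L x k = x k) := by
  by_cases hk : usedIn L k
  · obtain ⟨⟨i, j⟩, hc, rfl | rfl⟩ := hk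
    · exact Or.inl ⟨j, hc, applyLayer_of_mem_fst hL.2 hc x⟩
    · exact Or.inr (Or.inl ⟨i, hc, applyLayer_of_mem_snd hL hc x⟩)
  · exact Or.inr (Or.inr ⟨hk, applyLayer_of_not_usedIn hk x⟩)

lemma applyLayer_congr {L L' : Layer n} (hL : IsGenLayer L) (hL' : IsGenLayer L')
    {k : Fin n} (h : ∀ c : Comp n, c.1 = k ∨ c.2 = k → (c ∈ L ↔ c ∈ L'))
    (x : Fin n → Bool) : applyLayer L x k = applyLayer L' x k := by
  rcases hL.applyLayer_cases x k with ⟨j, hc, hx⟩ | ⟨i, hc, hx⟩ | ⟨hk, hx⟩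
  · rw [hx, applyLayer_of_mem_fst hL'.2 ((h _ (Or.inl rfl)).1 hc)]
  · rw [hx, applyLayer_of_mem_snd hL' ((h _ (Or.inr rfl)).1 hc)]
  · have hk' : ¬ usedIn L' k := fun ⟨c, hc, hck⟩ => hk ⟨c, (h c hck).2 hc, hck⟩
    rw [hx, applyLayer_of_not_usedIn hk']

lemma IsLayer.toGen {L : Layer n} (hL : IsLayer L) : IsGenLayer L :=
  ⟨fun c hc => (hL.1 c hc).ne, hL.2⟩

lemma IsLayer.subset {L L' : Layer n} (h : L' ⊆ L) (hL : IsLayer L) : IsLayer L' :=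
  ⟨fun c hc => hL.1 c (h hc), fun c hc c' hc' hne => hL.2 c (h hc) c' (h hc') hne⟩

lemma NoOverlap.subset {L L' : Layer n} (h : L' ⊆ L) (hL : NoOverlap L) : NoOverlap L' :=
  fun c hc c' hc' hne => hL c (h hc) c' (h hc') hne

lemma NoOverlap.insert {L : Layer n} (hL : NoOverlap L) {c : Comp n}
    (h1 : ¬ usedIn L c.1) (h2 : ¬ usedIn L c.2) : NoOverlap (insert c L) := by
  have hfree : ∀ u ∈ L, c.1 ≠ u.1 ∧ c.1 ≠ u.2 ∧ c.2 ≠ u.1 ∧ c.2 ≠ u.2 :=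
    fun u hu => ⟨fun e => h1 ⟨u, hu, Or.inl e.symm⟩, fun e => h1 ⟨u, hu, Or.inr e.symm⟩,
      fun e => h2 ⟨u, hu, Or.inl e.symm⟩, fun e => h2 ⟨u, hu, Or.inr e.symm⟩⟩
  intro u hu u' hu' hne
  rcases Finset.mem_insert.1 hu, Finset.mem_insert.1 hu' with ⟨rfl | huL, rfl | huL'⟩
  · exact absurd rfl hne
  · exact hfree u' huL'
  · obtain ⟨q1, q2, q3, q4⟩ := hfree u huL
    exact ⟨q1.symm, q3.symm, q2.symm, q4.symm⟩
  · exact hL u huL u' huL' hne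

lemma NoOverlap.not_usedIn_erase {L : Layer n} (hL : NoOverlap L) {c : Comp n}
    (hc : c ∈ L) : ¬ usedIn (L.erase c) c.1 ∧ ¬ usedIn (L.erase c) c.2 := by
  constructor <;>
  · rintro ⟨u, hu, hshare⟩
    obtain ⟨hne, huL⟩ := Finset.mem_erase.1 hu
    exact hne (hL.eq_of_shared_channel huL hc (by tauto))

lemma IsLayer.insert {L : Layer n} (hL : IsLayer L) {c : Comp n} (hc : c.1 < c.2)
    (h1 : ¬ usedIn L c.1) (h2 : ¬ usedIn L c.2) : IsLayer (insert c L) :=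
  ⟨by simpa [hc] using hL.1, hL.2.insert h1 h2⟩

lemma IsLayer.card_le {L : Layer n} (hL : IsLayer L) : L.card ≤ n := by
  have hinj : Set.InjOn Prod.fst (L : Set (Comp n)) := fun c hc c' hc' hfst => by
    by_contra hne
    exact (hL.2 c hc c' hc' hne).1 hfst
  simpa using Finset.card_le_card_of_injOn Prod.fst (fun _ _ => Finset.mem_univ _) hinj

end Layers

section Permutations

@[simp]
lemma permVec_apply_self (σ : Equiv.Perm (Fin n)) (x : Fin n → Bool) (k : Fin n) :
    permVec σ x (σ k) = x k := by
  simp [permVec]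

lemma permVec_permVec (σ ρ : Equiv.Perm (Fin n)) (x : Fin n → Bool) :
    permVec σ (permVec ρ x) = permVec (σ * ρ) x := by
  funext i
  simp [permVec, Equiv.Perm.mul_def]

lemma permVec_injective (σ : Equiv.Perm (Fin n)) : Function.Injective (permVec σ) :=
  fun a b h => funext fun i => by simpa using congrFun h (σ i)

lemma ncard_permSet (π : Equiv.Perm (Fin n)) (X : Set (Fin n → Bool)) :
    (permSet π X).ncard = X.ncard :=
  Set.ncard_image_of_injective X (permVec_injective π)

lemma mem_permLayer {σ : Equiv.Perm (Fin n)} {L : Layer n} {i j : Fin n} :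
    (σ i, σ j) ∈ permLayer σ L ↔ (i, j) ∈ L := by
  simp [permLayer]

lemma usedIn_permLayer {σ : Equiv.Perm (Fin n)} {L : Layer n} {k : Fin n} :
    usedIn (permLayer σ L) (σ k) ↔ usedIn L k := by
  simp [usedIn, permLayer]

lemma IsGenLayer.permLayer {L : Layer n} (hL : IsGenLayer L) (σ : Equiv.Perm (Fin n)) :
    IsGenLayer (permLayer σ L) := by
  refine ⟨?_, ?_⟩
  · simp only [SN.permLayer, Finset.mem_image]
    rintro _ ⟨c, hc, rfl⟩
    exact σ.injective.ne (hL.1 c hc)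
  · simp only [NoOverlap, SN.permLayer, Finset.mem_image]
    rintro _ ⟨c, hc, rfl⟩ _ ⟨c', hc', rfl⟩ hne
    obtain ⟨h1, h2, h3, h4⟩ := hL.2 c hc c' hc' (fun h => hne (h ▸ rfl))
    exact ⟨σ.injective.ne h1, σ.injective.ne h2, σ.injective.ne h3, σ.injective.ne h4⟩

lemma applyLayer_permLayer {L : Layer n} (hL : IsGenLayer L) (σ : Equiv.Perm (Fin n))
    (x : Fin n → Bool) :
    applyLayer (permLayer σ L) (permVec σ x) = permVec σ (applyLayer L x) := by
  have hL' := hL.permLayer σ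
  funext i
  obtain ⟨k, rfl⟩ := σ.surjective i
  rw [permVec_apply_self]
  rcases hL.applyLayer_cases x k with ⟨j, hc, hx⟩ | ⟨j, hc, hx⟩ | ⟨hk, hx⟩
  · rw [hx, applyLayer_of_mem_fst hL'.2 (mem_permLayer.2 hc)]
    simp
  · rw [hx, applyLayer_of_mem_snd hL' (mem_permLayer.2 hc)]
    simp
  · rw [hx, applyLayer_of_not_usedIn (mt usedIn_permLayer.1 hk)]
    simp

end Permutations

section Untangling

lemma IsGenLayer.flip {L : Layer n} (hL : IsGenLayer L) {a b : Fin n} (hab : (a, b) ∈ L) :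
    IsGenLayer (insert (b, a) (L.erase (a, b))) := by
  obtain ⟨ha, hb⟩ := hL.2.not_usedIn_erase hab
  refine ⟨fun c hc => ?_, (hL.2.subset (L.erase_subset _)).insert hb ha⟩
  rcases Finset.mem_insert.1 hc with rfl | hc
  exacts [(hL.1 _ hab).symm, hL.1 c (Finset.mem_of_mem_erase hc)]

lemma applyLayer_flip {L : Layer n} (hL : IsGenLayer L) {a b : Fin n} (hab : (a, b) ∈ L)
    (x : Fin n → Bool) :
    applyLayer (insert (b, a) (L.erase (a, b))) x
      = permVec (Equiv.swap a b) (applyLayer L x) := by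
  have hL' := hL.flip hab
  have hba : ((b, a) : Comp n) ∈ insert (b, a) (L.erase (a, b)) := Finset.mem_insert_self _ _
  funext k
  simp only [permVec, Equiv.symm_swap]
  rcases eq_or_ne k a with rfl | hka
  · rw [Equiv.swap_apply_left, applyLayer_of_mem_snd hL' hba, applyLayer_of_mem_snd hL hab,
      Bool.or_comm]
  rcases eq_or_ne k b with rfl | hkb
  · rw [Equiv.swap_apply_right, applyLayer_of_mem_fst hL'.2 hba, applyLayer_of_mem_fst hL.2 hab,
      Bool.and_comm]
  rw [Equiv.swap_apply_of_ne_of_ne hka hkb]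
  refine applyLayer_congr hL' hL (fun c hck => ?_) x
  have hc : c ≠ (a, b) ∧ c ≠ (b, a) := by
    constructor <;> rintro rfl <;> simp_all [eq_comm]
  simp [hc]

lemma IsGenLayer.exists_isLayer {L : Layer n} (hL : IsGenLayer L) :
    ∃ (M : Layer n) (ρ : Equiv.Perm (Fin n)), IsLayer M ∧
      ∀ x, applyLayer M x = permVec ρ (applyLayer L x) := by
  induction hm : (L.filter fun c => ¬ c.1 < c.2).card using Nat.strong_induction_on
    generalizing L with
  | _ m ih =>
  by_cases hbad : ∃ c ∈ L, ¬ c.1 < c.2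
  · obtain ⟨⟨a, b⟩, hab, hnlt⟩ := hbad
    have hba : b < a := lt_of_le_of_ne (not_lt.1 hnlt) (hL.1 _ hab).symm
    have hlt : ((insert (b, a) (L.erase (a, b))).filter fun c => ¬ c.1 < c.2).card < m := by
      rw [← hm]
      refine Finset.card_lt_card ⟨fun c hc => ?_, fun hsub => ?_⟩
      · simp only [Finset.mem_filter, Finset.mem_insert, Finset.mem_erase] at hc ⊢
        obtain ⟨rfl | ⟨-, hc⟩, hnc⟩ := hc
        exacts [absurd hba hnc, ⟨hc, hnc⟩]
      · have := hsub (Finset.mem_filter.2 ⟨hab, hnlt⟩)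
        simp only [Finset.mem_filter, Finset.mem_insert, Finset.mem_erase, Prod.mk.injEq] at this
        obtain ⟨⟨hab', -⟩ | ⟨hne, -⟩, -⟩ := this
        exacts [hL.1 _ hab hab', hne rfl]
    obtain ⟨M, ρ, hM, hρ⟩ := ih _ hlt (hL.flip hab) rfl
    exact ⟨M, ρ * Equiv.swap a b, hM, fun x => by
      rw [hρ, applyLayer_flip hL hab, permVec_permVec]⟩
  · push Not at hbad
    exact ⟨L, 1, ⟨hbad, hL.2⟩, fun x => rfl⟩

lemma run_cons (L : Layer n) (C : Net n) (x : Fin n → Bool) :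
    run (L :: C) x = run C (applyLayer L x) := rfl

lemma run_append (C D : Net n) (x : Fin n → Bool) : run (C ++ D) x = run D (run C x) :=
  List.foldl_append ..

lemma IsGenNet.exists_isNet {N : Net n} (hN : IsGenNet N) (σ : Equiv.Perm (Fin n)) :
    ∃ (N' : Net n) (τ : Equiv.Perm (Fin n)), IsNet N' ∧ N'.length = N.length ∧
      ∀ x, run N' (permVec σ x) = permVec τ (run N x) := by
  induction N generalizing σ with
  | nil => exact ⟨[], σ, by simp [IsNet], rfl, fun x => rfl⟩
  | cons L rest ih =>
    obtain ⟨M, ρ, hM, hρ⟩ := ((hN L List.mem_cons_self).permLayer σ).exists_isLayer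
    obtain ⟨N', τ, hN', hlen, hτ⟩ :=
      ih (fun L' hL' => hN L' (List.mem_cons_of_mem _ hL')) (ρ * σ)
    refine ⟨M :: N', τ, ?_, by simp [hlen], fun x => ?_⟩
    · simpa [IsNet] using ⟨hM, hN'⟩
    · rw [run_cons, run_cons, hρ, applyLayer_permLayer (hN L List.mem_cons_self),
        permVec_permVec, hτ]

end Untangling

section Sorted

lemma applyLayer_of_bSorted {L : Layer n} (hL : IsLayer L) {x : Fin n → Bool}
    (hx : BSorted x) : applyLayer L x = x := by
  funext k
  rcases hL.toGen.applyLayer_cases x k with ⟨j, hc, h⟩ | ⟨i, hc, h⟩ | ⟨-, h⟩ <;> rw [h]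
  · simpa [Bool.le_iff_imp] using hx _ _ (hL.1 _ hc).le
  · simpa [Bool.le_iff_imp] using hx _ _ (hL.1 _ hc).le

lemma run_of_bSorted {C : Net n} (hC : IsNet C) {x : Fin n → Bool} (hx : BSorted x) :
    run C x = x := by
  induction C with
  | nil => rfl
  | cons L rest ih =>
    rw [run_cons, applyLayer_of_bSorted (hC L List.mem_cons_self) hx]
    exact ih fun L' hL' => hC L' (List.mem_cons_of_mem _ hL')

def weight (x : Fin n → Bool) : ℕ := (Finset.univ.filter fun i => x i = true).card

lemma weight_permVec (σ : Equiv.Perm (Fin n)) (x : Fin n → Bool) :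
    weight (permVec σ x) = weight x := by
  rw [weight, weight, ← Finset.card_map σ.symm.toEmbedding]
  congr 1
  ext i
  simp [Finset.mem_map_equiv]

lemma eq_of_le_of_weight_le {a b : Fin n → Bool} (hab : a ≤ b) (h : weight b ≤ weight a) :
    a = b := by
  have hsub :
      (Finset.univ.filter fun i => a i = true) ⊆ Finset.univ.filter fun i => b i = true := by
    intro i
    simpa using fun hi => by simpa [hi, Bool.le_iff_imp] using hab i
  have heq := Finset.eq_of_subset_of_card_le hsub h
  funext i
  simpa using congrArg (i ∈ ·) heq

lemma BSorted.le_or_ge {a b : Fin n → Bool} (ha : BSorted a) (hb : BSorted b) :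
    a ≤ b ∨ b ≤ a := by
  refine or_iff_not_imp_left.2 fun h j => ?_
  obtain ⟨i, hi⟩ := not_forall.1 h
  obtain ⟨hai, hbi⟩ : a i = true ∧ b i = false := by simpa [Bool.le_iff_imp] using hi
  rcases le_total i j with hij | hji
  · exact (show b j ≤ a i by simp [hai]).trans (ha i j hij)
  · exact (hb j i hji).trans (by simp [hbi])

lemma BSorted.eq_of_weight_eq {a b : Fin n → Bool} (ha : BSorted a) (hb : BSorted b)
    (h : weight a = weight b) : a = b :=
  (ha.le_or_ge hb).elim (fun hab => eq_of_le_of_weight_le hab h.ge)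
    fun hba => (eq_of_le_of_weight_le hba h.le).symm

lemma BSorted.eq_of_eq_permVec {s v : Fin n → Bool} (hs : BSorted s) (hv : BSorted v)
    {τ : Equiv.Perm (Fin n)} (h : v = permVec τ s) : v = s :=
  hv.eq_of_weight_eq hs (by rw [h, weight_permVec])

end Sorted

theorem IsSortingNet.replace_prefix {P P' rest : Net n} (hS : IsSortingNet (P ++ rest))
    (hP' : IsNet P') {π : Equiv.Perm (Fin n)} (hsub : outputs P' ⊆ permSet π (outputs P)) :
    ∃ rest' : Net n, rest'.length = rest.length ∧ IsSortingNet (P' ++ rest') := by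
  obtain ⟨hnet, hsort⟩ := hS
  have hrest : IsGenNet rest := fun L hL => (hnet L (List.mem_append_right _ hL)).toGen
  obtain ⟨rest', τ, hrest', hlen, hrun⟩ := hrest.exists_isNet π
  have hperm : ∀ z ∈ outputs P', ∃ s, BSorted s ∧ run rest' z = permVec τ s := by
    intro z hz
    obtain ⟨_, ⟨x, rfl⟩, rfl⟩ := hsub hz
    exact ⟨run (P ++ rest) x, hsort x, by rw [hrun, run_append]⟩
  have hfix : ∀ v, BSorted v → permVec τ v = v := by
    intro v hv
    obtain ⟨s, hs, hrun'⟩ := hperm v ⟨v, run_of_bSorted hP' hv⟩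
    rw [run_of_bSorted hrest' hv] at hrun'
    rw [← hs.eq_of_eq_permVec hv hrun'] at hrun'
    exact hrun'.symm
  refine ⟨rest', hlen, fun L hL => (List.mem_append.1 hL).elim (hP' L) (hrest' L), fun x => ?_⟩
  obtain ⟨s, hs, hx⟩ := hperm _ ⟨x, rfl⟩
  rw [run_append, hx, hfix s hs]
  exact hs

section Saturation

/-- Lexicographic in (number of outputs, number of comparators), since two standard layers
have at most `2 * n` comparators. -/
noncomputable def prefixCost (L1 L2 : Layer n) : ℕ :=
  (outputs [L1, L2]).ncard * (2 * n + 1) + (L1.card + L2.card)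

lemma prefixCost_lt_of_outputs_eq_permSet {L1 L2 L1' L2' : Layer n} {π : Equiv.Perm (Fin n)}
    (h : outputs [L1', L2'] = permSet π (outputs [L1, L2]))
    (hcard : L1'.card + L2'.card < L1.card + L2.card) :
    prefixCost L1' L2' < prefixCost L1 L2 := by
  rw [prefixCost, prefixCost, h, ncard_permSet]
  omega

lemma prefixCost_lt_of_outputs_ssubset_permSet {L1 L2 L1' L2' : Layer n}
    {π : Equiv.Perm (Fin n)} (hL1' : IsLayer L1') (hL2' : IsLayer L2')
    (h : outputs [L1', L2'] ⊂ permSet π (outputs [L1, L2])) :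
    prefixCost L1' L2' < prefixCost L1 L2 := by
  have hlt : (outputs [L1', L2']).ncard < (outputs [L1, L2]).ncard := by
    rw [← ncard_permSet π (outputs [L1, L2])]
    exact Set.ncard_lt_ncard h ((Set.finite_range _).image _)
  have h1 := hL1'.card_le
  have h2 := hL2'.card_le
  calc prefixCost L1' L2'
      < ((outputs [L1', L2']).ncard + 1) * (2 * n + 1) := by rw [prefixCost]; nlinarith
    _ ≤ (outputs [L1, L2]).ncard * (2 * n + 1) := Nat.mul_le_mul_right _ hlt
    _ ≤ prefixCost L1 L2 := Nat.le_add_right _ _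

lemma saturated_of_prefixCost_le {L1 L2 : Layer n} {rest : Net n}
    (hS : IsSortingNet (L1 :: L2 :: rest))
    (hmin : ∀ (L1' L2' : Layer n) (rest' : Net n), rest'.length = rest.length →
      IsSortingNet (L1' :: L2' :: rest') → prefixCost L1 L2 ≤ prefixCost L1' L2') :
    Saturated L1 L2 := by
  have hL1 : IsLayer L1 := hS.1 L1 (by simp)
  have hL2 : IsLayer L2 := hS.1 L2 (by simp)
  have hopt : ∀ {L1' L2' : Layer n} {π : Equiv.Perm (Fin n)}, IsLayer L1' → IsLayer L2' →
      outputs [L1', L2'] ⊆ permSet π (outputs [L1, L2]) →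
      ¬ prefixCost L1' L2' < prefixCost L1 L2 := by
    intro L1' L2' π hL1' hL2' hsub
    obtain ⟨rest', hlen, hS'⟩ :=
      IsSortingNet.replace_prefix (P := [L1, L2]) (P' := [L1', L2']) hS
        (by simpa [IsNet] using ⟨hL1', hL2'⟩) hsub
    exact not_lt.2 (hmin L1' L2' rest' hlen hS')
  refine ⟨?_, ?_⟩
  · rintro ⟨π, ⟨c, hc, heq⟩ | ⟨c, hc, heq⟩⟩ <;> have := Finset.card_erase_lt_of_mem hc
    · exact hopt (hL1.subset (L1.erase_subset c)) hL2 heq.subset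
        (prefixCost_lt_of_outputs_eq_permSet heq (by omega))
    · exact hopt hL1 (hL2.subset (L2.erase_subset c)) heq.subset
        (prefixCost_lt_of_outputs_eq_permSet heq (by omega))
  · rintro ⟨c, π, hc, h1, h2, hss⟩
    have hL2' := hL2.insert hc h1 h2
    exact hopt hL1 hL2' hss.subset (prefixCost_lt_of_outputs_ssubset_permSet hL1 hL2' hss)

end Saturation

/-- saturated two-layer networks form a complete set of filters:
if there is a sorting network on n channels of depth d ≥ 2, then there is one
of depth d whose first two layers form a saturated two-layer network. -/
theorem saturated_complete_filters {n d : ℕ} (hd : 2 ≤ d)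
    (h : ∃ C : Net n, C.length = d ∧ IsSortingNet C) :
    ∃ (L1 L2 : Layer n) (rest : Net n),
      (L1 :: L2 :: rest).length = d ∧
      IsSortingNet (L1 :: L2 :: rest) ∧
      Saturated L1 L2 := by
  obtain ⟨C, rfl, hC⟩ := h
  obtain ⟨L1, L2, rest, rfl⟩ : ∃ L1 L2 rest, C = L1 :: L2 :: rest := by
    match C, hd with
    | L1 :: L2 :: rest, _ => exact ⟨L1, L2, rest, rfl⟩
  obtain ⟨⟨M1, M2, rest'⟩, ⟨hlen, hS⟩, hmin⟩ :=
    (measure fun p : Layer n × Layer n × Net n => prefixCost p.1 p.2.1).wf.has_min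
      {p | p.2.2.length = rest.length ∧ IsSortingNet (p.1 :: p.2.1 :: p.2.2)}
      ⟨(L1, L2, rest), rfl, hC⟩
  refine ⟨M1, M2, rest', by simp [hlen], hS, saturated_of_prefixCost_le hS ?_⟩
  exact fun L1' L2' rest'' hl hS' => not_lt.1 (hmin (L1', L2', rest'') ⟨hl.trans hlen, hS'⟩)

end SN
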